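/- Let I ⊆ k[x_1,…,x_n] be an ideal, let ℚ^r carry the lexicographic order, and let M ∈ ℚ^{r×n} have rows u_1,…,u_r ∈ ℚ^n. Then in_M(I) = in_{u_r}( … (in_{u_2}(in_{u_1}(I))) … ), the iterated rank-1 initial ideal taken successively with respect to u_1, then u_2, …, then u_r. -/

import Mathlib

/-!
Comparing `Mα` lexicographically means comparing first by `u₁ · α` and breaking ties by the
weight of the remaining rows, so by induction on `r` it suffices to show
`in_{(u,w)}(I) = in_w(in_u(I))` for a rational weight vector `u` and an arbitrary weight `w`.
Pointwise `in_{(u,w)}(f) = in_w(in_u(f))`, which gives `⊆`. For `⊇`, the key fact is that every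
`u`-homogeneous component of an element of `in_u(I)` is `0` or an initial form `in_u(f)` with
`f ∈ I`: initial forms are stable under multiplication by monomials, so `in_u(I)` is the `k`-span
of initial forms, and two initial forms of the same `u`-degree add up to `0` or to the initial
form of the sum. Since each `u`-component of `in_w(g)` is `0` or `in_w` of the corresponding
component of `g`, `in_w(g)` is a sum of terms `in_w(in_u(f)) = in_{(u,w)}(f)`.
-/

open MvPolynomial

instance finWellFoundedLT {r : ℕ} : WellFoundedLT (Fin r) := Finite.to_wellFoundedLT

/-- The initial form of a polynomial with respect to a comparison `le` on exponent vectors: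
the sum of the terms of `f` whose exponent is `le`-minimal in the support of `f`. -/
noncomputable def initialForm {k : Type} [Field k] {n : ℕ}
    (le : (Fin n →₀ ℕ) → (Fin n →₀ ℕ) → Prop)
    (f : MvPolynomial (Fin n) k) : MvPolynomial (Fin n) k :=
  letI := Classical.decPred fun α : Fin n →₀ ℕ => ∀ β ∈ f.support, le α β
  ∑ α ∈ f.support.filter (fun α => ∀ β ∈ f.support, le α β),
    monomial α (MvPolynomial.coeff α f)

/-- The initial ideal of `I`: the ideal generated by initial forms of nonzero elements of `I`. -/
noncomputable def initialIdeal {k : Type} [Field k] {n : ℕ}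
    (le : (Fin n →₀ ℕ) → (Fin n →₀ ℕ) → Prop)
    (I : Ideal (MvPolynomial (Fin n) k)) : Ideal (MvPolynomial (Fin n) k) :=
  Ideal.span {g | ∃ f ∈ I, f ≠ 0 ∧ g = initialForm le f}

/-- The weight `Mα ∈ ℚ^r` of an exponent vector `α` under the weighting matrix `M`. -/
def mwt {n r : ℕ} (M : Matrix (Fin r) (Fin n) ℚ) (α : Fin n →₀ ℕ) : Fin r → ℚ :=
  fun i => ∑ j, M i j * (α j : ℚ)

/-- Comparison of exponents by `M`-weight, in the lexicographic order on `ℚ^r`. -/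
def mLe {n r : ℕ} (M : Matrix (Fin r) (Fin n) ℚ) : (Fin n →₀ ℕ) → (Fin n →₀ ℕ) → Prop :=
  fun α β => toLex (mwt M α) ≤ toLex (mwt M β)

/-- The weight `u·α ∈ ℚ` of an exponent vector under a single weight vector `u ∈ ℚ^n`. -/
def uwt {n : ℕ} (u : Fin n → ℚ) (α : Fin n →₀ ℕ) : ℚ := ∑ j, u j * (α j : ℚ)

/-- Comparison of exponents by `u`-weight. -/
def uLe {n : ℕ} (u : Fin n → ℚ) : (Fin n →₀ ℕ) → (Fin n →₀ ℕ) → Prop :=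
  fun α β => uwt u α ≤ uwt u β

/-- The iterated rank-1 initial ideal `in_{u_r}(…(in_{u_1}(I))…)`, for `us = [u_1, …, u_r]`. -/
noncomputable def iteratedInitial {k : Type} [Field k] {n : ℕ}
    (us : List (Fin n → ℚ)) (I : Ideal (MvPolynomial (Fin n) k)) :
    Ideal (MvPolynomial (Fin n) k) :=
  us.foldl (fun J u => initialIdeal (uLe u) J) I

open scoped Classical

open Finsupp (weight)

section InitialForm

variable {k : Type} [Field k] {n : ℕ} (le : (Fin n →₀ ℕ) → (Fin n →₀ ℕ) → Prop)

def initialForms (I : Ideal (MvPolynomial (Fin n) k)) : Set (MvPolynomial (Fin n) k) :=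
  {g | ∃ f ∈ I, f ≠ 0 ∧ g = initialForm le f}

theorem coeff_initialForm (f : MvPolynomial (Fin n) k) (β : Fin n →₀ ℕ) :
    coeff β (initialForm le f) =
      if β ∈ f.support ∧ ∀ γ ∈ f.support, le β γ then coeff β f else 0 := by
  simp only [initialForm, coeff_sum, coeff_monomial, Finset.sum_ite_eq', Finset.mem_filter]

theorem mem_support_initialForm {f : MvPolynomial (Fin n) k} {β : Fin n →₀ ℕ} :
    β ∈ (initialForm le f).support ↔ β ∈ f.support ∧ ∀ γ ∈ f.support, le β γ := by
  rw [mem_support_iff, coeff_initialForm]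
  split_ifs with h
  · exact iff_of_true (mem_support_iff.mp h.1) h
  · exact iff_of_false (not_not_intro rfl) h

theorem coeff_initialForm_of_mem_support {f : MvPolynomial (Fin n) k} {β : Fin n →₀ ℕ}
    (hβ : β ∈ (initialForm le f).support) : coeff β (initialForm le f) = coeff β f := by
  rw [coeff_initialForm, if_pos ((mem_support_initialForm le).1 hβ)]

theorem support_initialForm_subset (f : MvPolynomial (Fin n) k) :
    (initialForm le f).support ⊆ f.support :=
  fun _ hβ => ((mem_support_initialForm le).1 hβ).1

theorem initialForm_zero : initialForm le (0 : MvPolynomial (Fin n) k) = 0 := by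
  simp [initialForm]

theorem initialForm_smul {c : k} (hc : c ≠ 0) (f : MvPolynomial (Fin n) k) :
    initialForm le (c • f) = c • initialForm le f := by
  ext β
  simp only [coeff_smul, coeff_initialForm, support_smul_eq hc]
  split_ifs <;> simp

theorem smul_mem_initialForms {I : Ideal (MvPolynomial (Fin n) k)} {c : k} (hc : c ≠ 0)
    {g : MvPolynomial (Fin n) k} (hg : g ∈ initialForms le I) : c • g ∈ initialForms le I := by
  obtain ⟨f, hfI, hf0, rfl⟩ := hg
  exact ⟨c • f, Submodule.smul_of_tower_mem I c hfI, smul_ne_zero hc hf0,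
    (initialForm_smul le hc f).symm⟩

theorem initialForm_of_forall (h : ∀ α β, le α β) (f : MvPolynomial (Fin n) k) :
    initialForm le f = f := by
  ext β
  rw [coeff_initialForm]
  split_ifs with hβ
  · rfl
  · simp_all

theorem initialIdeal_of_forall (h : ∀ α β, le α β) (I : Ideal (MvPolynomial (Fin n) k)) :
    initialIdeal le I = I := by
  refine le_antisymm (Ideal.span_le.2 ?_) fun f hf => ?_
  · rintro _ ⟨f, hf, -, rfl⟩
    rwa [initialForm_of_forall le h]
  · obtain rfl | hf0 := eq_or_ne f 0
    · exact zero_mem _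
    · exact Ideal.subset_span ⟨f, hf, hf0, (initialForm_of_forall le h f).symm⟩

end InitialForm

section LinearOrderWeight

variable {k : Type} [Field k] {n : ℕ} {W W' : Type*} [LinearOrder W] [LinearOrder W']

theorem initialForm_ne_zero (wt : (Fin n →₀ ℕ) → W) {f : MvPolynomial (Fin n) k} (hf : f ≠ 0) :
    initialForm (InvImage (· ≤ ·) wt) f ≠ 0 := by
  obtain ⟨α, hα, hmin⟩ := f.support.exists_min_image wt (support_nonempty.2 hf)
  exact support_nonempty.1 ⟨α, (mem_support_initialForm _).2 ⟨hα, hmin⟩⟩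

theorem initialForm_lex (wt : (Fin n →₀ ℕ) → W) (wt' : (Fin n →₀ ℕ) → W')
    (f : MvPolynomial (Fin n) k) :
    initialForm (InvImage (· ≤ ·) fun α => toLex (wt α, wt' α)) f =
      initialForm (InvImage (· ≤ ·) wt') (initialForm (InvImage (· ≤ ·) wt) f) := by
  have hsupp : ∀ β,
      β ∈ (initialForm (InvImage (· ≤ ·) fun α => toLex (wt α, wt' α)) f).support ↔
        β ∈ (initialForm (InvImage (· ≤ ·) wt') (initialForm (InvImage (· ≤ ·) wt) f)).support := by
    intro β
    simp only [mem_support_initialForm, InvImage, Prod.Lex.toLex_le_toLex]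
    grind
  ext β
  by_cases hβ : β ∈ (initialForm (InvImage (· ≤ ·) fun α => toLex (wt α, wt' α)) f).support
  · have hβ' := (hsupp β).1 hβ
    rw [coeff_initialForm_of_mem_support _ hβ, coeff_initialForm_of_mem_support _ hβ',
      coeff_initialForm_of_mem_support _ (support_initialForm_subset _ _ hβ')]
  · rw [notMem_support_iff.1 hβ, notMem_support_iff.1 (mt (hsupp β).2 hβ)]

end LinearOrderWeight

theorem MvPolynomial.restrictScalars_ideal_span_of_monomial_mul_mem {R σ : Type*}
    [CommSemiring R] {S : Set (MvPolynomial σ R)} (hS : ∀ γ s, s ∈ S → monomial γ 1 * s ∈ S) :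
    (Ideal.span S).restrictScalars R = Submodule.span R S := by
  have hmonomial : ∀ γ, ∀ x ∈ Submodule.span R S, monomial γ 1 * x ∈ Submodule.span R S := by
    intro γ x hx
    induction hx using Submodule.span_induction with
    | mem s hs => exact Submodule.subset_span (hS γ s hs)
    | zero => simp
    | add x y _ _ hx hy => rw [mul_add]; exact add_mem hx hy
    | smul c x _ hx => rw [mul_smul_comm]; exact Submodule.smul_mem _ c hx
  have hmul : ∀ p, ∀ x ∈ Submodule.span R S, p * x ∈ Submodule.span R S := by
    intro p x hx
    induction p using MvPolynomial.induction_on' with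
    | monomial γ c =>
      rw [show monomial γ c = c • monomial γ 1 by rw [smul_monomial, smul_eq_mul, mul_one],
        smul_mul_assoc]
      exact Submodule.smul_mem _ c (hmonomial γ x hx)
    | add p q hp hq => rw [add_mul]; exact add_mem hp hq
  refine le_antisymm (fun x hx => ?_) (Submodule.span_le.2 Ideal.subset_span)
  induction hx using Submodule.span_induction with
  | mem s hs => exact Submodule.subset_span hs
  | zero => exact zero_mem _
  | add x y _ _ hx hy => exact add_mem hx hy
  | smul p x _ hx => exact hmul p x hx

section AdditiveWeight

variable {k : Type} [Field k] {n : ℕ} {G : Type*} [AddCommMonoid G] [LinearOrder G]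
  (w : Fin n → G)

theorem initialForm_eq_weightedHomogeneousComponent {f : MvPolynomial (Fin n) k} {d : G}
    (hd : ∀ α ∈ f.support, d ≤ weight w α) (hne : weightedHomogeneousComponent w d f ≠ 0) :
    initialForm (InvImage (· ≤ ·) (weight w)) f = weightedHomogeneousComponent w d f := by
  obtain ⟨β₀, hβ₀⟩ := exists_coeff_ne_zero hne
  rw [coeff_weightedHomogeneousComponent] at hβ₀
  split_ifs at hβ₀ with hwβ₀
  · ext β
    rw [coeff_initialForm, coeff_weightedHomogeneousComponent]
    by_cases hβ : β ∈ f.support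
    · refine if_congr ⟨fun h => le_antisymm (hwβ₀ ▸ h.2 β₀ (mem_support_iff.2 hβ₀)) (hd β hβ),
        fun h => ⟨hβ, fun γ hγ => h.trans_le (hd γ hγ)⟩⟩ rfl rfl
    · simp [notMem_support_iff.1 hβ]
  · exact absurd rfl hβ₀

theorem exists_initialForm_eq_weightedHomogeneousComponent {f : MvPolynomial (Fin n) k}
    (hf : f ≠ 0) : ∃ d, (∀ α ∈ f.support, d ≤ weight w α) ∧
      initialForm (InvImage (· ≤ ·) (weight w)) f = weightedHomogeneousComponent w d f := by
  obtain ⟨α, hα, hmin⟩ := f.support.exists_min_image (weight w) (support_nonempty.2 hf)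
  refine ⟨weight w α, hmin, initialForm_eq_weightedHomogeneousComponent w hmin ?_⟩
  refine ne_zero_iff.2 ⟨α, ?_⟩
  rwa [coeff_weightedHomogeneousComponent, if_pos rfl, ← mem_support_iff]

theorem initialForm_eq_weightedHomogeneousComponent_of_isWeightedHomogeneous
    {f : MvPolynomial (Fin n) k} (hf : f ≠ 0) {d : G}
    (hd : (initialForm (InvImage (· ≤ ·) (weight w)) f).IsWeightedHomogeneous w d) :
    (∀ α ∈ f.support, d ≤ weight w α) ∧
      initialForm (InvImage (· ≤ ·) (weight w)) f = weightedHomogeneousComponent w d f := by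
  obtain ⟨d', hd', heq⟩ := exists_initialForm_eq_weightedHomogeneousComponent w hf
  obtain rfl : d' = d := (heq ▸ weightedHomogeneousComponent_isWeightedHomogeneous d' f).inj_right
    (initialForm_ne_zero _ hf) hd
  exact ⟨hd', heq⟩

theorem add_mem_initialForms {I : Ideal (MvPolynomial (Fin n) k)} {a b : MvPolynomial (Fin n) k}
    {d : G} (ha : a ∈ initialForms (InvImage (· ≤ ·) (weight w)) I)
    (hb : b ∈ initialForms (InvImage (· ≤ ·) (weight w)) I) (had : a.IsWeightedHomogeneous w d)
    (hbd : b.IsWeightedHomogeneous w d) (hab : a + b ≠ 0) :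
    a + b ∈ initialForms (InvImage (· ≤ ·) (weight w)) I := by
  obtain ⟨f, hfI, hf0, rfl⟩ := ha
  obtain ⟨g, hgI, hg0, rfl⟩ := hb
  obtain ⟨hfd, hf⟩ := initialForm_eq_weightedHomogeneousComponent_of_isWeightedHomogeneous w hf0 had
  obtain ⟨hgd, hg⟩ := initialForm_eq_weightedHomogeneousComponent_of_isWeightedHomogeneous w hg0 hbd
  have hfg : weightedHomogeneousComponent w d (f + g) =
      initialForm (InvImage (· ≤ ·) (weight w)) f +
        initialForm (InvImage (· ≤ ·) (weight w)) g := by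
    rw [map_add, hf, hg]
  refine ⟨f + g, add_mem hfI hgI, fun h => hab (by rw [← hfg, h, map_zero]), ?_⟩
  rw [← hfg]
  refine (initialForm_eq_weightedHomogeneousComponent w (fun α hα => ?_) (hfg ▸ hab)).symm
  rcases Finset.mem_union.1 (support_add hα) with hα | hα
  exacts [hfd α hα, hgd α hα]

theorem weightedHomogeneousComponent_monomial_mul [IsLeftCancelAdd G] (γ : Fin n →₀ ℕ) (c : k)
    (d : G) (f : MvPolynomial (Fin n) k) :
    weightedHomogeneousComponent w (weight w γ + d) (monomial γ c * f) =
      monomial γ c * weightedHomogeneousComponent w d f := by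
  ext β
  rw [coeff_weightedHomogeneousComponent, coeff_monomial_mul', coeff_monomial_mul',
    coeff_weightedHomogeneousComponent]
  by_cases hγβ : γ ≤ β
  · obtain ⟨α, rfl⟩ := le_iff_exists_add.1 hγβ
    simp only [map_add, add_right_inj, add_tsub_cancel_left, if_pos hγβ]
    split_ifs <;> simp
  · simp [hγβ]

variable [IsOrderedCancelAddMonoid G]

theorem initialForm_monomial_mul (γ : Fin n →₀ ℕ) {c : k} (hc : c ≠ 0)
    (f : MvPolynomial (Fin n) k) :
    initialForm (InvImage (· ≤ ·) (weight w)) (monomial γ c * f) =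
      monomial γ c * initialForm (InvImage (· ≤ ·) (weight w)) f := by
  obtain rfl | hf := eq_or_ne f 0
  · simp only [mul_zero, initialForm_zero]
  obtain ⟨d, hd, heq⟩ := exists_initialForm_eq_weightedHomogeneousComponent w hf
  have hsupp : ∀ β ∈ (monomial γ c * f).support, weight w γ + d ≤ weight w β := by
    intro β hβ
    rw [mem_support_iff, coeff_monomial_mul'] at hβ
    split_ifs at hβ with hγβ
    · obtain ⟨α, rfl⟩ := le_iff_exists_add.1 hγβ
      rw [add_tsub_cancel_left] at hβ
      rw [map_add]
      exact add_le_add_right (hd α (mem_support_iff.2 (right_ne_zero_of_mul hβ))) _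
    · exact absurd rfl hβ
  have hne : weightedHomogeneousComponent w (weight w γ + d) (monomial γ c * f) ≠ 0 := by
    rw [weightedHomogeneousComponent_monomial_mul, ← heq]
    exact mul_ne_zero (monomial_eq_zero.not.2 hc) (initialForm_ne_zero _ hf)
  rw [initialForm_eq_weightedHomogeneousComponent w hsupp hne,
    weightedHomogeneousComponent_monomial_mul, heq]

theorem monomial_mul_mem_initialForms {I : Ideal (MvPolynomial (Fin n) k)} (γ : Fin n →₀ ℕ)
    {s : MvPolynomial (Fin n) k} (hs : s ∈ initialForms (InvImage (· ≤ ·) (weight w)) I) :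
    monomial γ 1 * s ∈ initialForms (InvImage (· ≤ ·) (weight w)) I := by
  obtain ⟨f, hfI, hf0, rfl⟩ := hs
  exact ⟨monomial γ 1 * f, I.mul_mem_left _ hfI,
    mul_ne_zero (monomial_eq_zero.not.2 one_ne_zero) hf0,
    (initialForm_monomial_mul w γ one_ne_zero f).symm⟩

theorem weightedHomogeneousComponent_mem_initialForms {I : Ideal (MvPolynomial (Fin n) k)}
    {g : MvPolynomial (Fin n) k} (hg : g ∈ initialIdeal (InvImage (· ≤ ·) (weight w)) I)
    (d : G) : weightedHomogeneousComponent w d g ∈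
      insert 0 (initialForms (InvImage (· ≤ ·) (weight w)) I) := by
  have hg' : g ∈ Submodule.span k (initialForms (InvImage (· ≤ ·) (weight w)) I) := by
    rw [← restrictScalars_ideal_span_of_monomial_mul_mem (monomial_mul_mem_initialForms w)]
    exact hg
  clear hg
  induction hg' using Submodule.span_induction with
  | mem s hs =>
    obtain ⟨f, hfI, hf0, rfl⟩ := hs
    obtain ⟨e, -, he⟩ := exists_initialForm_eq_weightedHomogeneousComponent w hf0
    have hhom := he ▸ weightedHomogeneousComponent_isWeightedHomogeneous e f
    obtain rfl | hde := eq_or_ne d e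
    · rw [hhom.weightedHomogeneousComponent_same]
      exact Or.inr ⟨f, hfI, hf0, rfl⟩
    · exact Or.inl (hhom.weightedHomogeneousComponent_ne d hde)
  | zero => exact Or.inl (map_zero _)
  | add x y _ _ hx hy =>
    rw [map_add]
    rcases hx with hx | hx
    · rwa [hx, zero_add]
    rcases hy with hy | hy
    · rw [hy, add_zero]
      exact Or.inr hx
    by_cases hxy : weightedHomogeneousComponent w d x + weightedHomogeneousComponent w d y = 0
    · exact Or.inl hxy
    exact Or.inr (add_mem_initialForms w hx hy
      (weightedHomogeneousComponent_isWeightedHomogeneous _ _)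
      (weightedHomogeneousComponent_isWeightedHomogeneous _ _) hxy)
  | smul c x _ hx =>
    rw [map_smul]
    obtain rfl | hc := eq_or_ne c 0
    · exact Or.inl (zero_smul _ _)
    rcases hx with hx | hx
    · exact Or.inl (by rw [hx, smul_zero])
    · exact Or.inr (smul_mem_initialForms _ hc hx)

end AdditiveWeight

section Lex

variable {k : Type} [Field k] {n : ℕ} {G W : Type*} [AddCommMonoid G] [LinearOrder G]
  [LinearOrder W] (w : Fin n → G) (wt : (Fin n →₀ ℕ) → W)

theorem weightedHomogeneousComponent_initialForm (d : G) (g : MvPolynomial (Fin n) k) :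
    weightedHomogeneousComponent w d (initialForm (InvImage (· ≤ ·) wt) g) = 0 ∨
      weightedHomogeneousComponent w d (initialForm (InvImage (· ≤ ·) wt) g) =
        initialForm (InvImage (· ≤ ·) wt) (weightedHomogeneousComponent w d g) := by
  refine or_iff_not_imp_left.2 fun hne => ?_
  obtain ⟨β₀, hβ₀⟩ := exists_coeff_ne_zero hne
  rw [coeff_weightedHomogeneousComponent, coeff_initialForm] at hβ₀
  ext β
  rw [coeff_weightedHomogeneousComponent, coeff_initialForm, coeff_initialForm,
    support_weightedHomogeneousComponent, coeff_weightedHomogeneousComponent]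
  simp only [Finset.mem_filter, InvImage] at hβ₀ ⊢
  -- `β₀` is a `wt`-minimal exponent of `g` of `w`-degree `d`, so the `wt`-minimum over the
  -- degree-`d` part of `g` equals the `wt`-minimum over all of `g`.
  split_ifs at hβ₀ ⊢ <;> grind

theorem initialIdeal_lex [IsOrderedCancelAddMonoid G] (I : Ideal (MvPolynomial (Fin n) k)) :
    initialIdeal (InvImage (· ≤ ·) fun α => toLex (weight w α, wt α)) I =
      initialIdeal (InvImage (· ≤ ·) wt) (initialIdeal (InvImage (· ≤ ·) (weight w)) I) := by
  refine le_antisymm (Ideal.span_le.2 ?_) (Ideal.span_le.2 ?_)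
  · rintro _ ⟨f, hfI, hf0, rfl⟩
    rw [initialForm_lex]
    exact Ideal.subset_span
      ⟨_, Ideal.subset_span ⟨f, hfI, hf0, rfl⟩, initialForm_ne_zero _ hf0, rfl⟩
  · rintro _ ⟨g, hg, -, rfl⟩
    rw [← sum_weightedHomogeneousComponent w (initialForm _ g)]
    refine finsum_induction _ (zero_mem _) (fun _ _ => add_mem) fun d => ?_
    rcases weightedHomogeneousComponent_initialForm w wt d g with h | h
    · exact h ▸ zero_mem _
    rw [h]
    rcases weightedHomogeneousComponent_mem_initialForms w hg d with h0 | ⟨f, hfI, hf0, hf⟩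
    · rw [h0, initialForm_zero]
      exact zero_mem _
    · rw [hf, ← initialForm_lex]
      exact Ideal.subset_span ⟨f, hfI, hf0, rfl⟩

end Lex

theorem uwt_eq_weight {n : ℕ} (u : Fin n → ℚ) : uwt u = weight u := by
  ext α
  rw [uwt, Finsupp.weight_apply, Finsupp.sum_fintype _ _ (by simp)]
  simp only [nsmul_eq_mul, mul_comm]

theorem Pi.toLex_le_toLex_iff_head_tail {α : Type*} [LinearOrder α] {r : ℕ}
    (x y : Fin (r + 1) → α) :
    toLex x ≤ toLex y ↔ toLex (x 0, toLex (Fin.tail x)) ≤ toLex (y 0, toLex (Fin.tail y)) := by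
  have hmono : StrictMono fun x : Lex (Fin (r + 1) → α) =>
      toLex (ofLex x 0, toLex (Fin.tail (ofLex x))) := by
    intro x y hxy
    have h := (Fin.pi_lex_lt_cons_cons (x₀ := ofLex x 0) (x := Fin.tail (ofLex x))
      (y₀ := ofLex y 0) (y := Fin.tail (ofLex y)) (· < ·)).1
      (by rw [Fin.cons_self_tail, Fin.cons_self_tail]; exact hxy)
    exact Prod.Lex.toLex_lt_toLex.2 h
  exact (hmono.le_iff_le (a := toLex x) (b := toLex y)).symm

theorem mLe_succ {n r : ℕ} (M : Matrix (Fin (r + 1)) (Fin n) ℚ) :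
    mLe M = InvImage (· ≤ ·) fun α =>
      toLex (weight (M 0) α, toLex (mwt (M.submatrix Fin.succ id) α)) := by
  ext α β
  rw [mLe, Pi.toLex_le_toLex_iff_head_tail, ← uwt_eq_weight]
  rfl

theorem mLe_of_zero_rows {n : ℕ} (M : Matrix (Fin 0) (Fin n) ℚ) (α β : Fin n →₀ ℕ) : mLe M α β :=
  le_of_eq (congrArg toLex (Subsingleton.elim _ _))

/-- **Higher rank initial ideals are iterated rank-one initial ideals**
(Lemma `lem-in_w-in_u_i`): if `M` has rows `u_1, …, u_r` then
`in_M(I) = in_{u_r}(… in_{u_2}(in_{u_1}(I)) …)`. -/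
theorem stmt_8 {k : Type} [Field k] {n r : ℕ}
    (I : Ideal (MvPolynomial (Fin n) k)) (M : Matrix (Fin r) (Fin n) ℚ) :
    initialIdeal (mLe M) I =
      iteratedInitial (List.ofFn fun i : Fin r => (M i : Fin n → ℚ)) I := by
  induction r generalizing I with
  | zero => exact initialIdeal_of_forall _ (mLe_of_zero_rows M) I
  | succ r ih =>
    rw [mLe_succ, initialIdeal_lex, ← uwt_eq_weight, List.ofFn_succ]
    exact ih (initialIdeal (uLe (M 0)) I) (M.submatrix Fin.succ id)
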